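/- Let f be a weighted Boolean CSP instance on n ≥ 1 variables with m ≥ 1 constraints and weighted length ℓ > 0. Let ε ∈ (0,1] and let δ be a real number with δ ≥ 1 + εw/ℓ (so δ > 1). Set r = ⌊n·εw/(δℓ)⌋. Then the number of assignments z ∈ {0,1}^n with W(f,z) ≥ w* − εw is at least 2^{H(rδ/((δ−1)n)) · ((δ−1)/δ)·n} / (n+1). -/

import Mathlib

/-!
Call a variable cheap if its contribution `ℓⱼ` is at most `t = δℓ/n`; by Markov's inequality
there are `k ≥ (δ - 1)n/δ` cheap variables. Flipping a set `S` of variables in an optimal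
assignment can only falsify constraints meeting `S`, so it costs at most `∑_{j ∈ S} ℓⱼ`; for `r`
cheap variables this is at most `r t ≤ εw`. This yields `C(k, r)` distinct near-optimal
assignments, and `C(k, r) ≥ 2^{k H(r/k)} / (k + 1)` because `r^r (k - r)^(k - r) C(k, r)` is the
largest of the `k + 1` terms of `(r + (k - r))^k`. Since `x ↦ x H(r/x)` is nondecreasing on
`[r, ∞)`, `k` may be replaced by `(δ - 1)n/δ` in the exponent.
-/

/-- A weighted Boolean constraint satisfaction (MAX-CSP) instance on `n` variables:
`m` constraints, where constraint `i` is specified by a finite set `vars i` of variables,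
a predicate `sat i` on assignments whose truth value depends only on the restriction of the
assignment to `vars i`, and a positive real weight `wt i`. -/
structure CSP (n : ℕ) where
  m : ℕ
  vars : Fin m → Finset (Fin n)
  sat : Fin m → (Fin n → Bool) → Bool
  wt : Fin m → ℝ
  wt_pos : ∀ i, 0 < wt i
  sat_local : ∀ i z z', (∀ j ∈ vars i, z j = z' j) → sat i z = sat i z'

namespace CSP

variable {n : ℕ}

/-- The total weight `w = Σᵢ wᵢ`. -/
noncomputable def totalWeight (f : CSP n) : ℝ := ∑ i, f.wt i

/-- The weighted length `ℓ = Σᵢ |Sᵢ| wᵢ`. -/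
noncomputable def wlen (f : CSP n) : ℝ := ∑ i, ((f.vars i).card : ℝ) * f.wt i

/-- The contribution `ℓⱼ` of variable `j`: the sum of the weights of all constraints
containing it. -/
noncomputable def contrib (f : CSP n) (j : Fin n) : ℝ :=
  ∑ i, if j ∈ f.vars i then f.wt i else 0

/-- The weight `W(f,z)` of an assignment `z`: the sum of the weights of the constraints
satisfied by `z`. -/
noncomputable def W (f : CSP n) (z : Fin n → Bool) : ℝ :=
  ∑ i, if f.sat i z then f.wt i else 0

/-- The optimal weight `w* = max_z W(f,z)`. -/
noncomputable def wstar (f : CSP n) : ℝ :=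
  Finset.univ.sup' Finset.univ_nonempty f.W

end CSP

/-- The binary entropy function `H(p) = -p log₂ p - (1-p) log₂ (1-p)`,
with the convention `0 log₂ 0 = 0` (enforced by `Real.logb 2 0 = 0`). -/
noncomputable def binH (p : ℝ) : ℝ := -p * Real.logb 2 p - (1 - p) * Real.logb 2 (1 - p)

open Real Finset

lemma binH_eq_binEntropy_div_log_two (p : ℝ) : binH p = binEntropy p / log 2 := by
  simp only [binH, binEntropy_eq_negMulLog_add_negMulLog_one_sub, negMulLog, logb]
  ring

lemma two_rpow_mul_binH (x p : ℝ) : (2 : ℝ) ^ (x * binH p) = exp (x * binEntropy p) := by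
  rw [rpow_def_of_pos two_pos, binH_eq_binEntropy_div_log_two]
  field_simp

lemma mul_binEntropy_div {r x : ℝ} (hr : 0 ≤ r) (hrx : r ≤ x) :
    x * binEntropy (r / x) = x * log x - r * log r - (x - r) * log (x - r) := by
  rcases (hr.trans hrx).eq_or_lt with rfl | hx
  · obtain rfl : r = 0 := le_antisymm hrx hr
    simp
  have hlog : ∀ a, a * log (a / x) = a * log a - a * log x := fun a => by
    rcases eq_or_ne a 0 with rfl | ha
    · simp
    · rw [log_div ha hx.ne']; ring
  have hsub : 1 - r / x = (x - r) / x := by field_simp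
  rw [binEntropy_eq_negMulLog_add_negMulLog_one_sub, hsub]
  simp only [negMulLog]
  field_simp
  rw [hlog, hlog]
  ring

lemma ConvexOn.sub_le_sub_of_le {𝕜 : Type*} [Field 𝕜] [LinearOrder 𝕜] [IsStrictOrderedRing 𝕜]
    {s : Set 𝕜} {f : 𝕜 → 𝕜} (hf : ConvexOn 𝕜 s f) {x y h : 𝕜} (hx : x ∈ s) (hyh : y + h ∈ s)
    (hh : 0 ≤ h) (hxy : x ≤ y) : f (x + h) - f x ≤ f (y + h) - f y := by
  rcases hh.eq_or_lt with rfl | hh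
  · simp
  have hxh : x + h ∈ s := hf.1.ordConnected.out hx hyh ⟨by linarith, by linarith⟩
  have hy : y ∈ s := hf.1.ordConnected.out hx hyh ⟨hxy, by linarith⟩
  have hleft : (f (x + h) - f x) / h ≤ (f (y + h) - f x) / (y + h - x) := by
    simpa using hf.secant_mono hx hxh hyh (by linarith) (by linarith) (by linarith)
  have hright : (f (y + h) - f x) / (y + h - x) ≤ (f (y + h) - f y) / h := by
    convert hf.secant_mono hyh hx hy (by linarith) (by linarith) hxy using 1 <;>
      rw [← neg_div_neg_eq] <;> ring
  exact (div_le_div_iff_of_pos_right hh).1 (hleft.trans hright)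

lemma monotoneOn_mul_binEntropy_div {r : ℝ} (hr : 0 ≤ r) :
    MonotoneOn (fun x => x * binEntropy (r / x)) (Set.Ici r) := by
  intro x hx y hy hxy
  have hinc := convexOn_mul_log.sub_le_sub_of_le (x := x - r) (y := y - r) (h := r)
    (by simpa using hx) (by simpa using hr.trans hy) hr (by linarith)
  simp only [sub_add_cancel] at hinc
  simp only [mul_binEntropy_div hr hx, mul_binEntropy_div hr hy]
  linarith

lemma exp_natCast_mul_log (m : ℕ) : exp (m * log m) = (m : ℝ) ^ m := by
  rcases m.eq_zero_or_pos with rfl | hm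
  · simp
  · rw [← log_pow, exp_log (by positivity)]

def binomTerm (k r i : ℕ) : ℕ := k.choose i * r ^ i * (k - r) ^ (k - i)

lemma binomTerm_succ_mul {k i : ℕ} (r : ℕ) (hi : i < k) :
    binomTerm k r (i + 1) * ((i + 1) * (k - r)) = binomTerm k r i * (r * (k - i)) := by
  obtain ⟨d, rfl⟩ : ∃ d, k = i + 1 + d := ⟨k - (i + 1), by omega⟩
  have hchoose := Nat.choose_succ_right_eq (i + 1 + d) i
  simp only [binomTerm, show i + 1 + d - (i + 1) = d by omega,
    show i + 1 + d - i = d + 1 by omega] at hchoose ⊢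
  calc _ = (i + 1 + d).choose (i + 1) * (i + 1) * r ^ (i + 1) * (i + 1 + d - r) ^ (d + 1) := by
        ring
    _ = _ := by rw [hchoose]; ring

lemma binomTerm_le_succ {k r i : ℕ} (hir : i < r) (hrk : r ≤ k) :
    binomTerm k r i ≤ binomTerm k r (i + 1) := by
  refine Nat.le_of_mul_le_mul_right ?_ (Nat.mul_pos (by omega) (by omega) : 0 < r * (k - i))
  rw [← binomTerm_succ_mul r (by omega)]
  exact Nat.mul_le_mul_left _ (Nat.mul_le_mul (by omega) (by omega))

lemma binomTerm_succ_le {k r i : ℕ} (hri : r ≤ i) :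
    binomTerm k r (i + 1) ≤ binomTerm k r i := by
  rcases lt_or_ge i k with hik | hki
  · refine Nat.le_of_mul_le_mul_right ?_
      (Nat.mul_pos (by omega) (by omega) : 0 < (i + 1) * (k - r))
    rw [binomTerm_succ_mul r hik]
    exact Nat.mul_le_mul_left _ (Nat.mul_le_mul (by omega) (by omega))
  · simp [binomTerm, Nat.choose_eq_zero_of_lt (show k < i + 1 by omega)]

lemma binomTerm_le_binomTerm_self {k r : ℕ} (hrk : r ≤ k) (i : ℕ) :
    binomTerm k r i ≤ binomTerm k r r := by
  rcases le_total i r with hir | hri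
  · refine monotoneOn_of_le_add_one Set.ordConnected_Iic (fun j _ _ hj => ?_) hir le_rfl hir
    exact binomTerm_le_succ hj hrk
  · exact antitoneOn_of_add_one_le Set.ordConnected_Ici (fun j _ hj _ => binomTerm_succ_le hj)
      Set.self_mem_Ici hri hri

lemma pow_le_succ_mul_binomTerm_self {k r : ℕ} (hrk : r ≤ k) :
    k ^ k ≤ (k + 1) * binomTerm k r r := by
  have hsum : k ^ k = ∑ i ∈ range (k + 1), binomTerm k r i := by
    have h := add_pow r (k - r) k
    rw [Nat.add_sub_cancel' hrk] at h
    rw [h]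
    exact sum_congr rfl fun i _ => by simp only [binomTerm, Nat.cast_id]; ring
  calc k ^ k ≤ ∑ _i ∈ range (k + 1), binomTerm k r r :=
        hsum ▸ sum_le_sum fun i _ => binomTerm_le_binomTerm_self hrk i
    _ = (k + 1) * binomTerm k r r := by simp

lemma exp_mul_binEntropy_le_succ_mul_choose {k r : ℕ} (hrk : r ≤ k) :
    exp (k * binEntropy (r / k)) ≤ (k + 1) * k.choose r := by
  have hrk' : (r : ℝ) ≤ k := by exact_mod_cast hrk
  rw [mul_binEntropy_div r.cast_nonneg hrk', ← Nat.cast_sub hrk, exp_sub, exp_sub,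
    div_le_iff₀ (exp_pos _), div_le_iff₀ (exp_pos _), exp_natCast_mul_log, exp_natCast_mul_log,
    exp_natCast_mul_log]
  have h := pow_le_succ_mul_binomTerm_self hrk
  simp only [binomTerm] at h
  calc (k : ℝ) ^ k ≤ (k + 1) * (k.choose r * r ^ r * ((k - r : ℕ) : ℝ) ^ (k - r)) := by
        exact_mod_cast h
    _ = _ := by ring

def flipOn {α : Type*} [DecidableEq α] (S : Finset α) (z : α → Bool) : α → Bool :=
  fun j => if j ∈ S then !z j else z j

lemma flipOn_injective {α : Type*} [DecidableEq α] (z : α → Bool) :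
    Function.Injective fun S : Finset α => flipOn S z := by
  intro S S' h
  ext j
  have hj := congrFun h j
  by_cases hS : j ∈ S <;> by_cases hS' : j ∈ S' <;> simp_all [flipOn]

namespace CSP

variable {n : ℕ} (f : CSP n)

lemma totalWeight_nonneg : 0 ≤ f.totalWeight :=
  sum_nonneg fun i _ => (f.wt_pos i).le

lemma contrib_nonneg (j : Fin n) : 0 ≤ f.contrib j :=
  sum_nonneg fun i _ => ite_nonneg (f.wt_pos i).le le_rfl

lemma sum_contrib : ∑ j, f.contrib j = f.wlen := by
  simp only [contrib, wlen]
  rw [sum_comm]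
  refine sum_congr rfl fun i _ => ?_
  rw [sum_ite_mem, univ_inter, sum_const, nsmul_eq_mul]

lemma card_contrib_lt_mul_le_wlen (t : ℝ) : #{j | t < f.contrib j} * t ≤ f.wlen :=
  calc #{j | t < f.contrib j} * t = ∑ _j with t < f.contrib _j, t := by
        rw [sum_const, nsmul_eq_mul]
    _ ≤ ∑ j with t < f.contrib j, f.contrib j := sum_le_sum fun j hj => (mem_filter.1 hj).2.le
    _ ≤ ∑ j, f.contrib j :=
        sum_le_sum_of_subset_of_nonneg (filter_subset _ _) fun j _ _ => f.contrib_nonneg j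
    _ = f.wlen := f.sum_contrib

lemma sub_wlen_div_le_card_contrib_le {t : ℝ} (ht : 0 < t) :
    n - f.wlen / t ≤ #{j | f.contrib j ≤ t} := by
  have hsplit : (#{j | f.contrib j ≤ t} : ℝ) + #{j | ¬f.contrib j ≤ t} = n := by
    rw [← Nat.cast_add, card_filter_add_card_filter_not, card_univ, Fintype.card_fin]
  have hexpensive : (#{j | ¬f.contrib j ≤ t} : ℝ) ≤ f.wlen / t := by
    simp only [not_le]
    exact (le_div_iff₀ ht).2 (f.card_contrib_lt_mul_le_wlen t)
  linarith

lemma ite_sat_sub_ite_sat_flipOn_le (i : Fin f.m) (z : Fin n → Bool) (S : Finset (Fin n)) :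
    ((if f.sat i z then f.wt i else 0) - if f.sat i (flipOn S z) then f.wt i else 0) ≤
      ∑ j ∈ S, if j ∈ f.vars i then f.wt i else 0 := by
  have hterm_nonneg : ∀ j, 0 ≤ if j ∈ f.vars i then f.wt i else 0 :=
    fun j => ite_nonneg (f.wt_pos i).le le_rfl
  by_cases hdisj : Disjoint S (f.vars i)
  · have hsat : f.sat i (flipOn S z) = f.sat i z :=
      f.sat_local i _ _ fun j hj => by simp [flipOn, disjoint_right.1 hdisj hj]
    rw [hsat, sub_self]
    exact sum_nonneg fun j _ => hterm_nonneg j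
  · obtain ⟨j, hjS, hjv⟩ := not_disjoint_iff.1 hdisj
    calc _ ≤ f.wt i := by split_ifs <;> linarith [f.wt_pos i]
      _ = if j ∈ f.vars i then f.wt i else 0 := (if_pos hjv).symm
      _ ≤ _ := single_le_sum (fun j _ => hterm_nonneg j) hjS

lemma W_sub_sum_contrib_le_W_flipOn (z : Fin n → Bool) (S : Finset (Fin n)) :
    f.W z - ∑ j ∈ S, f.contrib j ≤ f.W (flipOn S z) := by
  have hswap : ∑ j ∈ S, f.contrib j = ∑ i, ∑ j ∈ S, if j ∈ f.vars i then f.wt i else 0 :=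
    sum_comm
  rw [hswap, sub_le_comm, W, W, ← sum_sub_distrib]
  exact sum_le_sum fun i _ => f.ite_sat_sub_ite_sat_flipOn_le i z S

lemma choose_card_le_card_near_optimal {T : Finset (Fin n)} {t b : ℝ} {r : ℕ}
    (hT : ∀ j ∈ T, f.contrib j ≤ t) (hrt : r * t ≤ b) :
    (#T).choose r ≤ Nat.card {z // f.wstar - b ≤ f.W z} := by
  obtain ⟨z₀, -, hz₀⟩ := exists_mem_eq_sup' univ_nonempty f.W
  rw [Nat.card_eq_fintype_card, Fintype.card_subtype, ← card_powersetCard]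
  refine card_le_card_of_injOn (fun S => flipOn S z₀) (fun S hS => ?_) (flipOn_injective z₀).injOn
  obtain ⟨hST, hScard⟩ := mem_powersetCard.1 hS
  have hcost : ∑ j ∈ S, f.contrib j ≤ b :=
    calc ∑ j ∈ S, f.contrib j ≤ ∑ _j ∈ S, t := sum_le_sum fun j hj => hT j (hST hj)
      _ = r * t := by rw [sum_const, hScard, nsmul_eq_mul]
      _ ≤ b := hrt
  have hflip := f.W_sub_sum_contrib_le_W_flipOn z₀ S
  simp only [coe_filter, mem_univ, true_and, Set.mem_ofPred_eq, wstar, hz₀]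
  linarith

theorem exp_mul_binEntropy_le_succ_mul_card_near_optimal {t b a : ℝ} {r : ℕ} (ht : 0 < t)
    (hrt : r * t ≤ b) (hra : r ≤ a) (ha : a ≤ n - f.wlen / t) :
    exp (a * binEntropy (r / a)) ≤ Nat.card {z // f.wstar - b ≤ f.W z} * (n + 1) := by
  set k := #{j | f.contrib j ≤ t}
  have hak : a ≤ k := ha.trans (f.sub_wlen_div_le_card_contrib_le ht)
  have hrk : r ≤ k := by exact_mod_cast hra.trans hak
  calc exp (a * binEntropy (r / a)) ≤ exp (k * binEntropy (r / k)) :=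
        exp_le_exp.2 (monotoneOn_mul_binEntropy_div r.cast_nonneg hra (hra.trans hak) hak)
    _ ≤ (k + 1) * k.choose r := exp_mul_binEntropy_le_succ_mul_choose hrk
    _ ≤ _ := by
        rw [mul_comm]
        gcongr
        · exact_mod_cast f.choose_card_le_card_near_optimal (fun j hj => (mem_filter.1 hj).2) hrt
        · exact_mod_cast (card_le_univ _).trans (Fintype.card_fin n).le

end CSP

theorem CSP.count_near_optimal_lower_bound_general (n : ℕ) (hn : 1 ≤ n) (f : CSP n)
    (hl : 0 < f.wlen) (ε : ℝ) (hε0 : 0 < ε)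
    (δ : ℝ) (hδ : 1 + ε * f.totalWeight / f.wlen ≤ δ)
    (r : ℕ) (hr : r = ⌊(n : ℝ) * ε * f.totalWeight / (δ * f.wlen)⌋₊) :
    (2 : ℝ) ^ (binH ((r : ℝ) * δ / ((δ - 1) * (n : ℝ))) * ((δ - 1) / δ) * (n : ℝ)) / ((n : ℝ) + 1)
      ≤ (Nat.card {z : Fin n → Bool // f.wstar - ε * f.totalWeight ≤ f.W z} : ℝ) := by
  have hn₀ : (0 : ℝ) < n := by exact_mod_cast hn
  have hw := f.totalWeight_nonneg
  have hεw : ε * f.totalWeight ≤ (δ - 1) * f.wlen := by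
    rwa [← div_le_iff₀ hl, le_sub_iff_add_le']
  have hδ₀ : 0 < δ := by linarith [div_nonneg (mul_nonneg hε0.le hw) hl.le]
  set t := δ * f.wlen / n with ht
  have ht₀ : 0 < t := by positivity
  have hfloor : r ≤ ε * f.totalWeight / t := by
    rw [hr, ht, div_div_eq_mul_div, mul_comm _ (n : ℝ), ← mul_assoc]
    exact Nat.floor_le (by positivity)
  have hra : r ≤ (δ - 1) / δ * n :=
    calc (r : ℝ) ≤ ε * f.totalWeight / t := hfloor
      _ ≤ (δ - 1) * f.wlen / t := by gcongr
      _ = (δ - 1) / δ * n := by rw [ht]; field_simp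
  have hexponent : binH (r * δ / ((δ - 1) * n)) * ((δ - 1) / δ) * n =
      (δ - 1) / δ * n * binH (r / ((δ - 1) / δ * n)) := by
    rw [div_mul_eq_mul_div, div_div_eq_mul_div]
    ring
  rw [hexponent, two_rpow_mul_binH, div_le_iff₀ (by positivity)]
  exact f.exp_mul_binEntropy_le_succ_mul_card_near_optimal ht₀ ((le_div_iff₀ ht₀).1 hfloor) hra
    (le_of_eq (by rw [ht]; field_simp))

theorem CSP.count_near_optimal_lower_bound (n : ℕ) (hn : 1 ≤ n) (f : CSP n) (hm : 1 ≤ f.m)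
    (hl : 0 < f.wlen) (ε : ℝ) (hε0 : 0 < ε) (hε1 : ε ≤ 1)
    (δ : ℝ) (hδ : 1 + ε * f.totalWeight / f.wlen ≤ δ)
    (r : ℕ) (hr : r = ⌊(n : ℝ) * ε * f.totalWeight / (δ * f.wlen)⌋₊) :
    (2 : ℝ) ^ (binH ((r : ℝ) * δ / ((δ - 1) * (n : ℝ))) * ((δ - 1) / δ) * (n : ℝ)) / ((n : ℝ) + 1)
      ≤ (Nat.card {z : Fin n → Bool // f.wstar - ε * f.totalWeight ≤ f.W z} : ℝ) :=
  CSP.count_near_optimal_lower_bound_general n hn f hl ε hε0 δ hδ r hr
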